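/- arXiv:2309.00554 — 2 statements merged into one kernel-verified Lean document; each statement's English description precedes it below -/
import Mathlib

section
/- Derived projective covers are unique up to isomorphism: if $\pi_1 \colon P_1 \to X$ and $\pi_2 \colon P_2 \to X$ are derived projective covers of an object $X$ in a triangulated category with a t-structure, then there is an isomorphism $\hat{g} \colon P_1 \to P_2$ with $\pi_2 \circ \hat{g} = \pi_1$. -/
open CategoryTheory Limits Pretriangulated

namespace Paper

universe v u

variable {C : Type u} [Category.{v} C] [Preadditive C] [HasZeroObject C]
  [HasShift C ℤ] [∀ n : ℤ, (shiftFunctor C n).Additive] [Pretriangulated C]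

open CategoryTheory.Triangulated

/-- The right perpendicular of a class of objects. -/
def rPerp (T : Set C) : Set C := {Y | ∀ X ∈ T, ∀ f : X ⟶ Y, f = 0}

/-- The left perpendicular of a class of objects. -/
def lPerp (T : Set C) : Set C := {X | ∀ Y ∈ T, ∀ f : X ⟶ Y, f = 0}

/-- `S^{⊥_{>0}}`. -/
def perpGT (S : Set C) : Set C := {X | ∀ P ∈ S, ∀ m : ℤ, 0 < m → ∀ f : P ⟶ X⟦m⟧, f = 0}

/-- `S^{⊥_{<0}}`. -/
def perpLT (S : Set C) : Set C := {X | ∀ P ∈ S, ∀ m : ℤ, m < 0 → ∀ f : P ⟶ X⟦m⟧, f = 0}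

/-- The pair `(S^{⊥_{>0}}, S^{⊥_{<0}})` is the t-structure `t`. -/
def IsSiltingTStructureFor (S : Set C) (t : TStructure C) : Prop :=
  (∀ X : C, t.le 0 X ↔ X ∈ perpGT S) ∧ (∀ X : C, t.ge 0 X ↔ X ∈ perpLT S)

/-- `X` is a retract (direct summand) of `Y`. -/
def IsRetractOf (X Y : C) : Prop := ∃ (i : X ⟶ Y) (r : Y ⟶ X), i ≫ r = 𝟙 X

/-- An indecomposable object: nonzero, and not a nontrivial biproduct. -/
def IndecObj {A : Type*} [Category A] [Limits.HasZeroMorphisms A]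
    [HasBinaryBiproducts A] (X : A) : Prop :=
  ¬ IsZero X ∧ ∀ Y Z : A, Nonempty (X ≅ Y ⊞ Z) → IsZero Y ∨ IsZero Z

section Biprod
variable [HasFiniteBiproducts C]

/-- The Karoubi closure: direct summands of finite coproducts of objects of `S`. -/
def Kar (S : Set C) : Set C :=
  {X | ∃ (n : ℕ) (f : Fin n → C), (∀ i, f i ∈ S) ∧ IsRetractOf X (⨁ f)}

/-- A class of objects is Krull–Schmidt: every object is a finite biproduct of
objects of the class with local endomorphism rings. -/
def KrullSchmidtOn (T : Set C) : Prop :=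
  ∀ X ∈ T, ∃ (n : ℕ) (f : Fin n → C),
    (∀ i, f i ∈ T ∧ IsLocalRing (End (f i))) ∧ Nonempty (X ≅ ⨁ f)

/-- The category `C` is Krull–Schmidt. -/
def IsKrullSchmidt : Prop :=
  ∀ X : C, ∃ (n : ℕ) (f : Fin n → C),
    (∀ i, IsLocalRing (End (f i))) ∧ Nonempty (X ≅ ⨁ f)

/-- A silting collection: pairwise non-isomorphic indecomposables whose Karoubi
closure is Krull–Schmidt, such that the perpendicular pair is the t-structure `t`. -/
structure IsSiltingCollection (S : Set C) (t : TStructure C) : Prop where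
  indec : ∀ P ∈ S, IndecObj P
  pairwise_noniso : ∀ P ∈ S, ∀ Q ∈ S, P ≠ Q → IsEmpty (P ≅ Q)
  kar_ks : KrullSchmidtOn (Kar S)
  tstr : IsSiltingTStructureFor S t

end Biprod

/-- Derived projective objects with respect to a t-structure. -/
def IsDerivedProjective (t : TStructure C) (P : C) : Prop :=
  t.le 0 P ∧ ∀ (X : C), t.le 0 X → ∀ f : P ⟶ X⟦(1 : ℤ)⟧, f = 0

/-- The heart of a t-structure, as a class of objects. -/
def heartSet (t : TStructure C) : Set C := {X | t.le 0 X ∧ t.ge 0 X}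

/-- The heart of a t-structure, as a full subcategory. -/
abbrev Heart (t : TStructure C) := ObjectProperty.FullSubcategory (heartSet t)

instance (t : TStructure C) : Category (Heart t) :=
  ObjectProperty.FullSubcategory.category (heartSet t)

instance (P : C → Prop) : Preadditive (ObjectProperty.FullSubcategory P) where
  homGroup X Y := InducedCategory.homEquiv.addCommGroup
  add_comp _ _ _ f f' g := by ext; exact Preadditive.add_comp _ _ _ f.hom f'.hom g.hom
  comp_add _ _ _ f g g' := by ext; exact Preadditive.comp_add _ _ _ f.hom g.hom g'.hom

/-- Truncation data for a t-structure: the truncation functors `t_{≤0}` (right adjoint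
to the inclusion of `D^{t≤0}`), `t_{≥0}` (left adjoint to the inclusion of `D^{t≥0}`),
and the zeroth cohomology functor `H = t_{≤0} ∘ t_{≥0}`. -/
structure TruncationData (t : TStructure C) where
  /-- the zeroth cohomology functor -/
  H : C ⥤ C
  H_heart : ∀ X : C, H.obj X ∈ heartSet t
  τle : C ⥤ C
  τleCounit : τle ⟶ 𝟭 C
  τle_mem : ∀ X : C, t.le 0 (τle.obj X)
  τle_fac : ∀ (X Z : C), t.le 0 Z → ∀ f : Z ⟶ X,
    ∃! g : Z ⟶ τle.obj X, g ≫ τleCounit.app X = f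
  τge : C ⥤ C
  τgeUnit : 𝟭 C ⟶ τge
  τge_mem : ∀ X : C, t.ge 0 (τge.obj X)
  τge_fac : ∀ (X Z : C), t.ge 0 Z → ∀ f : X ⟶ Z,
    ∃! g : τge.obj X ⟶ Z, τgeUnit.app X ≫ g = f
  H_eq : H = τge ⋙ τle

/-- The zeroth cohomology functor, valued in the heart. -/
def TruncationData.Hh {t : TStructure C} (TD : TruncationData t) : C ⥤ Heart t :=
  ObjectProperty.lift _ TD.H TD.H_heart

/-- A projective cover: an essential epimorphism from a projective object. -/
def IsProjectiveCover {A : Type*} [Category A] {P X : A} (π : P ⟶ X) : Prop :=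
  Projective P ∧ Epi π ∧ ∀ (R : A) (g : R ⟶ P), Epi (g ≫ π) → Epi g

/-- A derived projective cover of `X`. -/
def IsDerivedProjectiveCover {t : TStructure C} (TD : TruncationData t)
    {P X : C} (π : P ⟶ X) : Prop :=
  IsDerivedProjective t P ∧ IsProjectiveCover (TD.Hh.map π)

/-- A t-structure is non-degenerate. -/
def NonDegenerate (t : TStructure C) : Prop :=
  (∀ X : C, (∀ n : ℤ, t.le n X) → IsZero X) ∧ (∀ X : C, (∀ n : ℤ, t.ge n X) → IsZero X)

/-- An object of a category has finite length: bounded chains of subobjects. -/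
def FiniteLengthObj {A : Type*} [Category A] (X : A) : Prop :=
  ∃ n : ℕ, ∀ s : Fin (n + 1) → Subobject X, ¬ StrictMono s

/-- `D` has derived projectives: every projective of the heart is `H⁰` of a
derived projective. -/
def HasDerivedProjectives {t : TStructure C} (TD : TruncationData t) : Prop :=
  ∀ Q : Heart t, Projective Q → ∃ P : C, IsDerivedProjective t P ∧ Nonempty (TD.Hh.obj P ≅ Q)

/-- `D` has enough derived projectives. -/
def HasEnoughDerivedProjectives {t : TStructure C} (TD : TruncationData t) : Prop :=
  EnoughProjectives (Heart t) ∧ HasDerivedProjectives TD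

/-- The extension closure of a class of objects. -/
inductive ExtClos (T : Set C) : C → Prop
  | of {X : C} : X ∈ T → ExtClos T X
  | zero {X : C} : IsZero X → ExtClos T X
  | ext {A E B : C} (f : A ⟶ E) (g : E ⟶ B) (h : B ⟶ A⟦(1 : ℤ)⟧) :
      Triangle.mk f g h ∈ (distTriang C) → ExtClos T A → ExtClos T B → ExtClos T E

/-- The Karoubi (retract) closure of a class of objects. -/
def KarClos (T : Set C) : Set C := {X | ∃ Y ∈ T, IsRetractOf X Y}

/-- The triangulated subcategory generated by a class of objects. -/
inductive TriaClos (T : Set C) : C → Prop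
  | of {X : C} : X ∈ T → TriaClos T X
  | zero {X : C} : IsZero X → TriaClos T X
  | shift {X : C} (n : ℤ) : TriaClos T X → TriaClos T (X⟦n⟧)
  | ext {A E B : C} (f : A ⟶ E) (g : E ⟶ B) (h : B ⟶ A⟦(1 : ℤ)⟧) :
      Triangle.mk f g h ∈ (distTriang C) → TriaClos T A → TriaClos T B → TriaClos T E

/-- The thick subcategory generated by a class of objects. -/
inductive ThickClos (T : Set C) : C → Prop
  | of {X : C} : X ∈ T → ThickClos T X
  | zero {X : C} : IsZero X → ThickClos T X
  | shift {X : C} (n : ℤ) : ThickClos T X → ThickClos T (X⟦n⟧)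
  | ext {A E B : C} (f : A ⟶ E) (g : E ⟶ B) (h : B ⟶ A⟦(1 : ℤ)⟧) :
      Triangle.mk f g h ∈ (distTriang C) → ThickClos T A → ThickClos T B → ThickClos T E
  | retract {X Y : C} : IsRetractOf X Y → ThickClos T Y → ThickClos T X

/-- A thick subcategory, as a class of objects. -/
structure IsThickSet (T : Set C) : Prop where
  zero : ∀ X : C, IsZero X → X ∈ T
  shift : ∀ X ∈ T, ∀ n : ℤ, X⟦n⟧ ∈ T
  ext : ∀ (A E B : C) (f : A ⟶ E) (g : E ⟶ B) (h : B ⟶ A⟦(1 : ℤ)⟧),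
    Triangle.mk f g h ∈ (distTriang C) → A ∈ T → B ∈ T → E ∈ T
  retract : ∀ X Y : C, IsRetractOf X Y → Y ∈ T → X ∈ T

/-- A weight structure on the subcategory of `C` given by the class `CC`. -/
structure WeightStructureOn (CC : Set C) where
  le : Set C
  ge : Set C
  le_sub : le ⊆ CC
  ge_sub : ge ⊆ CC
  le_iso : ∀ X Y : C, (X ≅ Y) → X ∈ le → Y ∈ le
  ge_iso : ∀ X Y : C, (X ≅ Y) → X ∈ ge → Y ∈ ge
  le_retract : ∀ X Y : C, IsRetractOf X Y → Y ∈ le → X ∈ le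
  ge_retract : ∀ X Y : C, IsRetractOf X Y → Y ∈ ge → X ∈ ge
  le_shift : ∀ X ∈ le, X⟦(1 : ℤ)⟧ ∈ le
  ge_shift : ∀ X ∈ ge, X⟦(-1 : ℤ)⟧ ∈ ge
  orth : ∀ X : C, X⟦(1 : ℤ)⟧ ∈ ge → ∀ Y ∈ le, ∀ f : X ⟶ Y, f = 0
  decomp : ∀ X ∈ CC, ∃ (A B : C) (f : A ⟶ X) (g : X ⟶ B) (h : B ⟶ A⟦(1 : ℤ)⟧),
    Triangle.mk f g h ∈ (distTriang C) ∧ A⟦(1 : ℤ)⟧ ∈ ge ∧ B ∈ le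

namespace WeightStructureOn

variable {CC : Set C} (w : WeightStructureOn CC)

/-- `C_{w>0}`. -/
def gt : Set C := {X | X⟦(1 : ℤ)⟧ ∈ w.ge}

/-- `C_{w<0}`. -/
def lt : Set C := {X | X⟦(-1 : ℤ)⟧ ∈ w.le}

end WeightStructureOn

/-! For a derived projective `P` the functor `H⁰ = τ_{≤0} ∘ τ_{≥0}` is bijective on `Hom(P, X)`:
maps `P → X` correspond to maps `P → τ_{≥0} X`, since in the truncation triangle the remaining
terms `τ_{<0} X` and `τ_{<0} X[1]` receive no maps from `P`; and `τ_{≤0}` is bijective on maps out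
of an object of `D^{≤0}`, such as `τ_{≥0} P`. The isomorphism `H⁰ P₁ ≅ H⁰ P₂` over `H⁰ X` between
the two projective covers in the heart therefore lifts to an isomorphism `P₁ ≅ P₂` over `X`. -/

lemma IsProjectiveCover.exists_isIso_comp_eq {A : Type*} [Category A] {P₁ P₂ X : A}
    {f₁ : P₁ ⟶ X} {f₂ : P₂ ⟶ X} (h₁ : IsProjectiveCover f₁) (h₂ : IsProjectiveCover f₂) :
    ∃ u : P₁ ⟶ P₂, IsIso u ∧ u ≫ f₂ = f₁ := by
  obtain ⟨_, _, hess₁⟩ := h₁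
  obtain ⟨_, _, hess₂⟩ := h₂
  let u : P₁ ⟶ P₂ := Projective.factorThru f₁ f₂
  have hu : u ≫ f₂ = f₁ := Projective.factorThru_comp _ _
  have : Epi u := hess₂ _ u (hu ▸ inferInstance)
  let s : P₂ ⟶ P₁ := Projective.factorThru (𝟙 P₂) u
  have hs : s ≫ u = 𝟙 P₂ := Projective.factorThru_comp _ _
  have : Epi s := hess₁ _ s (by rw [← hu, ← Category.assoc, hs, Category.id_comp]; infer_instance)
  have : IsSplitMono s := ⟨⟨⟨u, hs⟩⟩⟩
  have : IsIso s := isIso_of_epi_of_isSplitMono s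
  have : IsIso (s ≫ u) := hs ▸ inferInstance
  exact ⟨u, IsIso.of_isIso_comp_left s u, hu⟩

lemma exists_isIso_comp_eq_of_bijective_map {A B : Type*} [Category A] [Category B] (F : A ⥤ B)
    {P₁ P₂ X : A} (hP₁ : ∀ Y, Function.Bijective (F.map : (P₁ ⟶ Y) → _))
    (hP₂ : ∀ Y, Function.Bijective (F.map : (P₂ ⟶ Y) → _)) {π₁ : P₁ ⟶ X} {π₂ : P₂ ⟶ X}
    (u : F.obj P₁ ⟶ F.obj P₂) [IsIso u] (hu : u ≫ F.map π₂ = F.map π₁) :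
    ∃ g : P₁ ⟶ P₂, IsIso g ∧ g ≫ π₂ = π₁ := by
  obtain ⟨g, rfl⟩ := (hP₁ P₂).2 u
  obtain ⟨g', hg'⟩ := (hP₂ P₁).2 (inv (F.map g))
  refine ⟨g, ⟨g', (hP₁ P₁).1 ?_, (hP₂ P₂).1 ?_⟩, (hP₁ X).1 (by simpa using hu)⟩ <;> simp [hg']

section TStructure

variable {t : TStructure C}

lemma IsDerivedProjective.hom_eq_zero_of_le_neg_one {P A : C} (hP : IsDerivedProjective t P)
    (hA : t.le (-1) A) (φ : P ⟶ A) : φ = 0 := by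
  let e := (shiftFunctorCompIsoId C (-1 : ℤ) 1 (by omega)).app A
  exact (cancel_mono e.inv).1 <| (hP.2 _ (t.le_shift (-1) (-1) 0 (by omega) A hA) _).trans
    zero_comp.symm

lemma IsDerivedProjective.bijective_comp_mor₂ {P : C} (hP : IsDerivedProjective t P)
    {T : Triangle C} (hT : T ∈ distTriang C) (h₁ : t.le (-1) T.obj₁) :
    Function.Bijective (fun φ : P ⟶ T.obj₂ => φ ≫ T.mor₂) := by
  refine ⟨(injective_iff_map_eq_zero (Preadditive.rightComp P T.mor₂)).2 fun φ hφ => ?_,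
    fun ψ => ?_⟩
  · obtain ⟨w, rfl⟩ := Triangle.coyoneda_exact₂ T hT φ hφ
    rw [hP.hom_eq_zero_of_le_neg_one h₁ w, zero_comp]
  · obtain ⟨φ, rfl⟩ := Triangle.coyoneda_exact₃ T hT ψ
      (hP.2 _ (t.le_monotone (by omega) _ h₁) _)
    exact ⟨φ, rfl⟩

namespace TruncationData

variable (TD : TruncationData t)

lemma exists_iso_truncGE (X : C) : ∃ e : (t.truncGE 0).obj X ≅ TD.τge.obj X,
    (t.truncGEπ 0).app X ≫ e.hom = TD.τgeUnit.app X := by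
  have : t.IsGE (TD.τge.obj X) 0 := ⟨TD.τge_mem X⟩
  obtain ⟨k', hk', -⟩ := TD.τge_fac X _ (t.ge_of_isGE _ 0) ((t.truncGEπ 0).app X)
  refine ⟨⟨t.descTruncGE (TD.τgeUnit.app X) 0, k', t.from_truncGE_obj_ext (by simp [hk']), ?_⟩,
    t.π_descTruncGE _ 0⟩
  obtain ⟨_, _, h_uniq⟩ := TD.τge_fac X _ (TD.τge_mem X) (TD.τgeUnit.app X)
  exact (h_uniq _ (by simp [reassoc_of% hk'])).trans (h_uniq _ (Category.comp_id _)).symm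

lemma le_zero_τge_obj {P : C} (hP : t.le 0 P) : t.le 0 (TD.τge.obj P) := by
  obtain ⟨e, -⟩ := TD.exists_iso_truncGE P
  have : t.IsLE ((t.truncLT 0).obj P) 1 := t.isLE_truncLT_obj P 0 1
  have : t.IsLE (((t.truncLT 0).obj P)⟦(1 : ℤ)⟧) 0 := t.isLE_shift _ 1 1 0
  have := t.isLE₂ _ (rot_of_distTriang _ (t.triangleLTGE_distinguished 0 P)) 0 ⟨hP⟩ this
  exact ((t.le 0).prop_iff_of_iso e).1 this.le

lemma isIso_τleCounit_app {W : C} (hW : t.le 0 W) : IsIso (TD.τleCounit.app W) := by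
  obtain ⟨s, hs, -⟩ := TD.τle_fac W W hW (𝟙 W)
  obtain ⟨_, _, h_uniq⟩ := TD.τle_fac W _ (TD.τle_mem W) (TD.τleCounit.app W)
  exact ⟨s, (h_uniq _ (by simp [hs])).trans (h_uniq _ (Category.id_comp _)).symm, hs⟩

lemma bijective_τle_map {W : C} (hW : t.le 0 W) (Y : C) :
    Function.Bijective (TD.τle.map : (W ⟶ Y) → _) := by
  have := TD.isIso_τleCounit_app hW
  have hnat : (fun k => k ≫ TD.τleCounit.app Y) ∘ (TD.τle.map : (W ⟶ Y) → _) =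
      fun k => TD.τleCounit.app W ≫ k := funext fun k => TD.τleCounit.naturality k
  rw [← Function.Bijective.of_comp_iff' ((Function.bijective_iff_existsUnique _).2
    (TD.τle_fac Y _ (TD.τle_mem W))), hnat]
  exact (asIso (TD.τleCounit.app W)).symm.homFromEquiv.bijective

lemma bijective_comp_τgeUnit {P : C} (hP : IsDerivedProjective t P) (X : C) :
    Function.Bijective (fun φ : P ⟶ X => φ ≫ TD.τgeUnit.app X) := by
  obtain ⟨e, he⟩ := TD.exists_iso_truncGE X
  have hπ : Function.Bijective (fun φ : P ⟶ X => φ ≫ (t.truncGEπ 0).app X) :=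
    hP.bijective_comp_mor₂ (t.triangleLTGE_distinguished 0 X) (t.isLE_truncLT_obj X 0 (-1)).le
  have hcomp : (fun φ : P ⟶ X => φ ≫ TD.τgeUnit.app X) =
      e.homToEquiv ∘ fun φ => φ ≫ (t.truncGEπ 0).app X := funext fun φ => by simp [← he]
  rw [hcomp]
  exact e.homToEquiv.bijective.comp hπ

lemma bijective_τge_map {P : C} (hP : IsDerivedProjective t P) (X : C) :
    Function.Bijective (TD.τge.map : (P ⟶ X) → _) := by
  have hnat : (fun k => TD.τgeUnit.app P ≫ k) ∘ (TD.τge.map : (P ⟶ X) → _) =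
      fun φ => φ ≫ TD.τgeUnit.app X := funext fun φ => (TD.τgeUnit.naturality φ).symm
  rw [← Function.Bijective.of_comp_iff' ((Function.bijective_iff_existsUnique _).2
    (TD.τge_fac P _ (TD.τge_mem X))), hnat]
  exact TD.bijective_comp_τgeUnit hP X

lemma bijective_Hh_map {P : C} (hP : IsDerivedProjective t P) (X : C) :
    Function.Bijective (TD.Hh.map : (P ⟶ X) → _) := by
  have hH : Function.Bijective (TD.H.map : (P ⟶ X) → _) := by
    rw [TD.H_eq]
    exact (TD.bijective_τle_map (TD.le_zero_τge_obj hP.1) _).comp (TD.bijective_τge_map hP X)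
  exact InducedCategory.homEquiv.symm.bijective.comp hH

end TruncationData

end TStructure

/-- derived projective covers are unique up to isomorphism. -/
theorem derivedProjectiveCover_unique (t : TStructure C) (TD : TruncationData t)
    {P₁ P₂ X : C} (π₁ : P₁ ⟶ X) (π₂ : P₂ ⟶ X)
    (h₁ : IsDerivedProjectiveCover TD π₁) (h₂ : IsDerivedProjectiveCover TD π₂) :
    ∃ g : P₁ ⟶ P₂, IsIso g ∧ g ≫ π₂ = π₁ := by
  obtain ⟨u, hu, hu_comp⟩ := h₁.2.exists_isIso_comp_eq h₂.2
  exact exists_isIso_comp_eq_of_bijective_map TD.Hh (TD.bijective_Hh_map h₁.1)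
    (TD.bijective_Hh_map h₂.1) u hu_comp

end Paper
end

section
/- Naturality of w-t-strict orthogonality: Let $w, w'$ be weight structures on triangulated categories $\mathcal{C}, \mathcal{C}'$ and $t, t'$ be t-structures on triangulated categories $\mathcal{D}, \mathcal{D}'$, with dualities $\Phi \colon \mathcal{C}^{op} \times \mathcal{D} \to \mathcal{A}$ and $\Phi' \colon \mathcal{C}'^{op} \times \mathcal{D}' \to \mathcal{A}$ such that $w$ is w-t-strictly left orthogonal to $t$ w.r.t. $\Phi$ and $w'$ to $t'$ w.r.t. $\Phi'$. Let $F \colon \mathcal{C} \to \mathcal{C}'$ and $G \colon \mathcal{D}' \to \mathcal{D}$ be functors with natural isomorphisms $\Phi'(F(X), Y) \cong \Phi(X, G(Y))$. Then $F(\mathcal{C}_{w>0}) \subseteq \mathcal{C}'_{w'>0}$ if and only if $G(\mathcal{D}'^{t'\leq 0}) \subseteq \mathcal{D}^{t\leq 0}$. -/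
open CategoryTheory Limits Pretriangulated

namespace Paper

universe v u

variable {C : Type u} [Category.{v} C] [Preadditive C] [HasZeroObject C]
  [HasShift C ℤ] [∀ n : ℤ, (shiftFunctor C n).Additive] [Pretriangulated C]

open CategoryTheory.Triangulated

instance (t : TStructure C) : Category.{v} (Heart t) :=
  ObjectProperty.FullSubcategory.category (heartSet t)

/-!
Both inclusions say that `Φ'(F X, Y) = 0` for all `X ∈ C_{w>0}` and `Y ∈ D'^{t'≤0}`. Shifting by
`[1]` and using `Φ(-,-) ≅ Φ(-[1],-[1])`, the orthogonality hypotheses give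
`C'_{w'>0} = ⊥(D'^{t'≤0})` and `D^{t≤0} = (C_{w>0})^⊥`; the isomorphism
`Φ'(F X, Y) ≅ Φ(X, G Y)` then matches the two conditions.
-/

lemma forall_iff_forall_shift {E : Type*} [Category E] [HasShift E ℤ] (n : ℤ) {P : E → Prop}
    (hP : ∀ ⦃X Y : E⦄, (X ≅ Y) → P X → P Y) : (∀ X, P X) ↔ ∀ X, P (X⟦n⟧) :=
  ⟨fun h _ => h _, fun h X => hP ((shiftEquiv E n).counitIso.app X) (h _)⟩

lemma _root_.CategoryTheory.Triangulated.TStructure.le_shift_iff {E : Type*} [Category E]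
    [Preadditive E] [HasZeroObject E] [HasShift E ℤ] [∀ n : ℤ, (shiftFunctor E n).Additive]
    [Pretriangulated E] (t : TStructure E) (X : E) (n a n' : ℤ) (h : a + n' = n) :
    t.le n' (X⟦a⟧) ↔ t.le n X := by
  simpa only [t.le_iff_isLE] using t.isLE_shift_iff X n a n' h

namespace WeightStructureOn

variable {D : Type*} [Category D] [Preadditive D] [HasZeroObject D] [HasShift D ℤ]
  [∀ n : ℤ, (shiftFunctor D n).Additive] [Pretriangulated D]
  {A : Type*} [Category A] {CC : Set C} (w : WeightStructureOn CC) (t : TStructure D)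
  {Φ : Cᵒᵖ ⥤ D ⥤ A}

lemma mem_gt_iff_forall_isZero
    (σ : ∀ (X : C) (Y : D), (Φ.obj (Opposite.op X)).obj Y ≅
      (Φ.obj (Opposite.op (X⟦(1 : ℤ)⟧))).obj (Y⟦(1 : ℤ)⟧))
    (hge : w.ge = {X : C | ∀ Y : D, t.le (-1) Y → IsZero ((Φ.obj (Opposite.op X)).obj Y)})
    (X : C) : X ∈ w.gt ↔ ∀ Y : D, t.le 0 Y → IsZero ((Φ.obj (Opposite.op X)).obj Y) := by
  change X⟦(1 : ℤ)⟧ ∈ w.ge ↔ _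
  rw [hge, Set.mem_ofPred_eq, forall_iff_forall_shift 1 fun Y Y' e hY hY' =>
    (hY ((t.le (-1)).prop_of_iso e.symm hY')).of_iso ((Φ.obj _).mapIso e).symm]
  exact forall_congr' fun Y => imp_congr (t.le_shift_iff Y 0 1 (-1) (by lia))
    (σ X Y).isZero_iff.symm

lemma le_zero_iff_forall_gt_isZero
    (σ : ∀ (X : C) (Y : D), (Φ.obj (Opposite.op X)).obj Y ≅
      (Φ.obj (Opposite.op (X⟦(1 : ℤ)⟧))).obj (Y⟦(1 : ℤ)⟧))
    (hle : {Y : D | t.le (-1) Y} = {Y : D | ∀ X ∈ w.ge, IsZero ((Φ.obj (Opposite.op X)).obj Y)})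
    (Y : D) : t.le 0 Y ↔ ∀ X ∈ w.gt, IsZero ((Φ.obj (Opposite.op X)).obj Y) := by
  rw [← t.le_shift_iff Y 0 1 (-1) (by lia)]
  change Y⟦(1 : ℤ)⟧ ∈ {Y : D | t.le (-1) Y} ↔ _
  rw [hle, Set.mem_ofPred_eq, forall_iff_forall_shift 1 fun X X' e hX hX' =>
    (hX (w.ge_iso _ _ e.symm hX')).of_iso ((Φ.mapIso e.op).app _)]
  exact forall_congr' fun X => imp_congr_right fun _ => (σ X Y).isZero_iff.symm

end WeightStructureOn

/-- naturality of w-t-strict orthogonality with respect to a pair of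
"Φ-Φ'-adjoint" functors. -/
theorem orthogonality_naturality
    {C' : Type*} [Category C'] [Preadditive C'] [HasZeroObject C'] [HasShift C' ℤ]
      [∀ n : ℤ, (shiftFunctor C' n).Additive] [Pretriangulated C']
    {D : Type*} [Category D] [Preadditive D] [HasZeroObject D] [HasShift D ℤ]
      [∀ n : ℤ, (shiftFunctor D n).Additive] [Pretriangulated D]
    {D' : Type*} [Category D'] [Preadditive D'] [HasZeroObject D'] [HasShift D' ℤ]
      [∀ n : ℤ, (shiftFunctor D' n).Additive] [Pretriangulated D']
    {A : Type*} [Category A] [Abelian A]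
    (w : WeightStructureOn (Set.univ : Set C))
    (w' : WeightStructureOn (Set.univ : Set C'))
    (t : TStructure D) (t' : TStructure D')
    (Φ : Cᵒᵖ ⥤ D ⥤ A) (Φ' : C'ᵒᵖ ⥤ D' ⥤ A)
    -- the dualities are compatible with shifts: `Φ(-,-) ≅ Φ(-[1],-[1])`
    (σ : ∀ (X : C) (Y : D), (Φ.obj (Opposite.op X)).obj Y ≅
      (Φ.obj (Opposite.op (X⟦(1 : ℤ)⟧))).obj (Y⟦(1 : ℤ)⟧))
    (σ' : ∀ (X : C') (Y : D'), (Φ'.obj (Opposite.op X)).obj Y ≅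
      (Φ'.obj (Opposite.op (X⟦(1 : ℤ)⟧))).obj (Y⟦(1 : ℤ)⟧))
    -- `w` is w-t-strictly left orthogonal to `t` with respect to `Φ`
    (hwt₁ : w.ge = {X : C | ∀ Y : D, t.le (-1) Y → IsZero ((Φ.obj (Opposite.op X)).obj Y)})
    (hwt₂ : w.le = {X : C | ∀ Y : D, t.ge 1 Y → IsZero ((Φ.obj (Opposite.op X)).obj Y)})
    (hwt₃ : {Y : D | t.le (-1) Y} = {Y : D | ∀ X ∈ w.ge, IsZero ((Φ.obj (Opposite.op X)).obj Y)})
    (hwt₄ : {Y : D | t.ge 1 Y} = {Y : D | ∀ X ∈ w.le, IsZero ((Φ.obj (Opposite.op X)).obj Y)})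
    -- `w'` is w-t-strictly left orthogonal to `t'` with respect to `Φ'`
    (hwt₁' : w'.ge = {X : C' | ∀ Y : D', t'.le (-1) Y → IsZero ((Φ'.obj (Opposite.op X)).obj Y)})
    (hwt₂' : w'.le = {X : C' | ∀ Y : D', t'.ge 1 Y → IsZero ((Φ'.obj (Opposite.op X)).obj Y)})
    (hwt₃' : {Y : D' | t'.le (-1) Y} = {Y : D' | ∀ X ∈ w'.ge, IsZero ((Φ'.obj (Opposite.op X)).obj Y)})
    (hwt₄' : {Y : D' | t'.ge 1 Y} = {Y : D' | ∀ X ∈ w'.le, IsZero ((Φ'.obj (Opposite.op X)).obj Y)})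
    (F : C ⥤ C') (G : D' ⥤ D)
    -- `F` and `G` are `Φ`-`Φ'`-adjoint: `Φ'(F(X), Y) ≅ Φ(X, G(Y))` naturally
    (adj : F.op ⋙ Φ' ≅ Φ ⋙ (Functor.whiskeringLeft D' D A).obj G) :
    (∀ X : C, X ∈ w.gt → F.obj X ∈ w'.gt) ↔
      (∀ Y : D', t'.le 0 Y → t.le 0 (G.obj Y)) := by
  have hadj (X : C) (Y : D') : IsZero ((Φ'.obj (Opposite.op (F.obj X))).obj Y) ↔
      IsZero ((Φ.obj (Opposite.op X)).obj (G.obj Y)) :=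
    ((adj.app (Opposite.op X)).app Y).isZero_iff
  simp only [w'.mem_gt_iff_forall_isZero t' σ' hwt₁', w.le_zero_iff_forall_gt_isZero t σ hwt₃,
    hadj]
  exact ⟨fun h Y hY X hX => h X hX Y hY, fun h X hX Y hY => h Y hY X hX⟩

end Paper
end
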